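/- arXiv:0804.2234 — 5 statements merged into one kernel-verified Lean document; each statement's English description precedes it below -/
import Mathlib

section
/- Let E be a finite-dimensional vector space over a complete ultrametric field K and α : E → E a linear automorphism. Then E admits a norm adapted to α; in particular, for each ρ in the set R(α) of absolute values of eigenvalues of α in an algebraic closure, there exists an ultrametric norm ‖·‖_ρ on the generalized eigenspace sum E_ρ with ‖α(x)‖_ρ = ρ·‖x‖_ρ for all x ∈ E_ρ. -/
/-!
Over the algebraic closure `L`, `L ⊗ E` is the direct sum of the generalized eigenspaces of
`β = α ⊗ 1`. On the generalized `μ`-eigenspace write `β = μ + n` with `n ^ m = 0`; for any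
ultrametric norm `B` and any `t > 1 / |μ|`, the norm `w ↦ max_{i ≤ m} t ^ i B (n ^ i w)` satisfies
`‖n w‖ ≤ t⁻¹ ‖w‖ < ‖μ w‖`, so `‖β w‖ = |μ| ‖w‖` by the strict ultrametric inequality. The maximum
of these norms over the eigenspaces, restricted to `E = 1 ⊗ E`, is adapted to `α`.
-/

open scoped TensorProduct

/-- The base change of a linear endomorphism to the algebraic closure. -/
noncomputable def baseChangeEnd {K : Type*} [NontriviallyNormedField K]
    {E : Type*} [AddCommGroup E] [Module K E] (α : E →ₗ[K] E) :
    Module.End (AlgebraicClosure K) (AlgebraicClosure K ⊗[K] E) :=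
  LinearMap.baseChange (AlgebraicClosure K) α

/-- `R(α)`: the set of absolute values of eigenvalues of `α` over the algebraic closure,
computed with respect to an absolute value `v` on the algebraic closure. -/
def eigAbs {K : Type*} [NontriviallyNormedField K] {E : Type*} [AddCommGroup E] [Module K E]
    (v : AbsoluteValue (AlgebraicClosure K) ℝ) (α : E →ₗ[K] E) : Set ℝ :=
  {r : ℝ | ∃ μ : AlgebraicClosure K, (baseChangeEnd α).HasEigenvalue μ ∧ v μ = r}

/-- `E_ρ`: the `α`-invariant `K`-subspace of `E` corresponding to all eigenvalues of
absolute value `ρ`, i.e. `E ∩ ⊕_{|λ| = ρ} (generalized λ-eigenspace over the closure)`. -/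
noncomputable def specSubspace {K : Type*} [NontriviallyNormedField K] {E : Type*}
    [AddCommGroup E] [Module K E] (v : AbsoluteValue (AlgebraicClosure K) ℝ)
    (α : E →ₗ[K] E) (ρ : ℝ) : Submodule K E :=
  Submodule.comap ((TensorProduct.mk K (AlgebraicClosure K) E) 1)
    (Submodule.restrictScalars K
      (⨆ μ ∈ {μ : AlgebraicClosure K | v μ = ρ}, (baseChangeEnd α).maxGenEigenspace μ))

open Finset
open scoped NNReal

section UltrametricNorm

variable {L : Type*} [Field L] (v : AbsoluteValue L ℝ) {W : Type*} [AddCommGroup W] [Module L W]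

-- Values in `ℝ≥0`, so that maxima over possibly empty finite sets are available as `Finset.sup`.
structure IsUltrametricNorm (N : W → ℝ≥0) : Prop where
  eq_zero_iff : ∀ w, N w = 0 ↔ w = 0
  map_smul : ∀ (c : L) (w : W), N (c • w) = (v c).toNNReal * N w
  isNonarchimedean : IsNonarchimedean N

variable {v}

namespace IsUltrametricNorm

variable {N : W → ℝ≥0} (hN : IsUltrametricNorm v N)
include hN

lemma map_zero : N 0 = 0 := (hN.eq_zero_iff 0).2 rfl

lemma map_neg (w : W) : N (-w) = N w := by
  simpa using hN.map_smul (-1) w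

lemma map_add_eq_left {a b : W} (h : N b < N a) : N (a + b) = N a := by
  rw [IsNonarchimedean.add_eq_max_of_ne' N hN.isNonarchimedean (fun w => (hN.map_neg w).symm)
    h.ne', max_eq_left h.le]

lemma coe_map_smul (c : L) (w : W) : (N (c • w) : ℝ) = v c * N w := by
  rw [hN.map_smul, NNReal.coe_mul, Real.coe_toNNReal _ (v.nonneg c)]

lemma const_mul {c : ℝ≥0} (hc : c ≠ 0) : IsUltrametricNorm v fun w => c * N w where
  eq_zero_iff w := by rw [mul_eq_zero, hN.eq_zero_iff]; simp [hc]
  map_smul a w := by rw [hN.map_smul, mul_left_comm]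
  isNonarchimedean w w' := by
    rw [← mul_max]
    exact mul_le_mul_right (hN.isNonarchimedean w w') c

end IsUltrametricNorm

lemma IsUltrametricNorm.finset_sup {ι : Type*} {W' : ι → Type*} [∀ i, AddCommGroup (W' i)]
    [∀ i, Module L (W' i)] {B : ∀ i, W' i → ℝ≥0} (hB : ∀ i, IsUltrametricNorm v (B i))
    (s : Finset ι) (f : ∀ i, W →ₗ[L] W' i) (hf : ∀ w, (∀ i ∈ s, f i w = 0) → w = 0) :
    IsUltrametricNorm v fun w => s.sup fun i => B i (f i w) where
  eq_zero_iff w := by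
    refine ⟨fun h => hf w fun i hi => (hB i).eq_zero_iff _ |>.1 ?_, fun h => ?_⟩
    · exact le_antisymm ((le_sup (f := fun i => B i (f i w)) hi).trans h.le) zero_le
    · simp [h, (hB _).map_zero]
  map_smul c w := by
    simp only [LinearMap.map_smul_of_tower, (hB _).map_smul, NNReal.mul_finset_sup]
  isNonarchimedean w w' := Finset.sup_le fun i hi => by
    rw [(f i).map_add]
    exact ((hB i).isNonarchimedean _ _).trans
      (max_le_max (le_sup (f := fun i => B i (f i w)) hi) (le_sup (f := fun i => B i (f i w')) hi))

lemma AbsoluteValue.isUltrametricNorm_toNNReal (hv : IsNonarchimedean v) :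
    IsUltrametricNorm v fun a : L => (v a).toNNReal where
  eq_zero_iff a := by simp [Real.toNNReal_eq_zero, (v.nonneg a).ge_iff_eq']
  map_smul c a := by rw [smul_eq_mul, map_mul, Real.toNNReal_mul (v.nonneg c)]
  isNonarchimedean a b := by
    rw [← Monotone.map_max fun _ _ => Real.toNNReal_mono]
    exact Real.toNNReal_mono (hv a b)

lemma exists_isUltrametricNorm [FiniteDimensional L W] (hv : IsNonarchimedean v) :
    ∃ N : W → ℝ≥0, IsUltrametricNorm v N :=
  let b := Module.finBasis L W
  ⟨_, .finset_sup (fun _ => v.isUltrametricNorm_toNNReal hv) univ b.coord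
    fun _ h => b.forall_coord_eq_zero_iff.1 fun i => h i (mem_univ i)⟩

lemma sup_pow_apply_le {B : W → ℝ≥0} (hB : IsUltrametricNorm v B) {n : Module.End L W} {m : ℕ}
    (hm : n ^ m = 0) {t : ℝ≥0} (ht : t ≠ 0) (w : W) :
    ((range (m + 1)).sup fun i => t ^ i * B ((n ^ i) (n w))) ≤
      t⁻¹ * (range (m + 1)).sup fun i => t ^ i * B ((n ^ i) w) := by
  refine Finset.sup_le fun i hi => ?_
  rw [← Module.End.mul_apply, ← pow_succ]
  rcases lt_or_ge (i + 1) (m + 1) with h | h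
  · calc t ^ i * B ((n ^ (i + 1)) w) = t⁻¹ * (t ^ (i + 1) * B ((n ^ (i + 1)) w)) := by
          rw [← mul_assoc, pow_succ' t, ← mul_assoc, inv_mul_cancel₀ ht, one_mul]
      _ ≤ _ := mul_le_mul_right
          (le_sup (f := fun i => t ^ i * B ((n ^ i) w)) (mem_range.2 h)) _
  · rw [pow_eq_zero_of_le (by omega) hm, LinearMap.zero_apply, hB.map_zero, mul_zero]
    exact zero_le

lemma exists_isUltrametricNorm_apply_eq_mul_of_ne_zero [FiniteDimensional L W]
    (hv : IsNonarchimedean v) {g : Module.End L W} {μ : L} (hμ : μ ≠ 0)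
    (hnil : IsNilpotent (g - algebraMap L _ μ)) :
    ∃ N : W → ℝ≥0, IsUltrametricNorm v N ∧ ∀ w, N (g w) = (v μ).toNNReal * N w := by
  obtain ⟨B, hB⟩ := exists_isUltrametricNorm hv (W := W)
  obtain ⟨m, hm⟩ := hnil
  set n := g - algebraMap L _ μ
  have hvμ : 0 < (v μ).toNNReal := Real.toNNReal_pos.2 (v.pos hμ)
  -- any weight `t > 1 / v μ` works
  set t : ℝ≥0 := 2 * (v μ).toNNReal⁻¹
  have ht : t ≠ 0 := by positivity
  have htμ : t⁻¹ < (v μ).toNNReal := by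
    rw [mul_inv, inv_inv, ← div_eq_inv_mul]
    exact NNReal.half_lt_self hvμ.ne'
  set N := fun w => (range (m + 1)).sup fun i => t ^ i * B ((n ^ i) w)
  have hN : IsUltrametricNorm v N :=
    .finset_sup (fun i => hB.const_mul (pow_ne_zero i ht)) _ (fun i => n ^ i)
      fun w h => by simpa using h 0 (by simp)
  refine ⟨N, hN, fun w => ?_⟩
  rcases eq_or_ne w 0 with rfl | hw
  · simp [hN.map_zero]
  have hlt : N (n w) < N (μ • w) := by
    rw [hN.map_smul]
    calc N (n w) ≤ t⁻¹ * N w := sup_pow_apply_le hB hm ht w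
      _ < (v μ).toNNReal * N w :=
          mul_lt_mul_of_pos_right htμ (pos_iff_ne_zero.2 fun h => hw ((hN.eq_zero_iff w).1 h))
  have hg : g w = μ • w + n w := by simp [n]
  rw [hg, hN.map_add_eq_left hlt, hN.map_smul]

lemma exists_isUltrametricNorm_apply_eq_mul [FiniteDimensional L W] (hv : IsNonarchimedean v)
    {g : Module.End L W} (hg : Function.Injective g) {μ : L}
    (hnil : IsNilpotent (g - algebraMap L _ μ)) :
    ∃ N : W → ℝ≥0, IsUltrametricNorm v N ∧ ∀ w, N (g w) = (v μ).toNNReal * N w := by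
  rcases eq_or_ne μ 0 with rfl | hμ
  · obtain ⟨k, hk⟩ : IsNilpotent g := by simpa using hnil
    have hW : ∀ w : W, w = 0 := fun w =>
      (hg.iterate k) (by simp [← Module.End.pow_apply, hk])
    obtain ⟨N, hN⟩ := exists_isUltrametricNorm hv (W := W)
    exact ⟨N, hN, fun w => by simp [hW w, hN.map_zero]⟩
  · exact exists_isUltrametricNorm_apply_eq_mul_of_ne_zero hv hμ hnil

end UltrametricNorm

namespace DirectSum.IsInternal

variable {L V ι : Type*} [Field L] [AddCommGroup V] [Module L V] [DecidableEq ι]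
  {G : ι → Submodule L V} (hG : IsInternal G)

noncomputable def proj (i : ι) : V →ₗ[L] G i :=
  (component L ι (fun i => G i) i).comp
    (LinearEquiv.ofBijective (coeLinearMap G) hG).symm.toLinearMap

lemma proj_apply_of_mem {i : ι} {y : V} (hy : y ∈ G i) : hG.proj i y = ⟨y, hy⟩ :=
  hG.ofBijective_coeLinearMap_of_mem hy

lemma proj_apply_of_mem_ne {i j : ι} (hij : j ≠ i) {y : V} (hy : y ∈ G j) : hG.proj i y = 0 :=
  hG.ofBijective_coeLinearMap_of_mem_ne hij hy

lemma proj_apply_eq_zero_of_mem_iSup {P : Set ι} {i : ι} (hi : i ∉ P) {y : V}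
    (hy : y ∈ ⨆ j ∈ P, G j) : hG.proj i y = 0 := by
  have hle : ⨆ j ∈ P, G j ≤ LinearMap.ker (hG.proj i) :=
    iSup₂_le fun j hj _ hz => hG.proj_apply_of_mem_ne (ne_of_mem_of_not_mem hj hi) hz
  exact hle hy

lemma eq_zero_of_forall_proj_eq_zero {y : V} (h : ∀ i, hG.proj i y = 0) : y = 0 :=
  (LinearEquiv.ofBijective (coeLinearMap G) hG).symm.map_eq_zero_iff.1 (DFinsupp.ext h)

lemma proj_apply_map {f : Module.End L V} (hf : ∀ i, Set.MapsTo f (G i) (G i)) (i : ι) (y : V) :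
    hG.proj i (f y) = f.restrict (hf i) (hG.proj i y) := by
  have htop :
      ⊤ ≤ LinearMap.eqLocus ((hG.proj i).comp f) ((f.restrict (hf i)).comp (hG.proj i)) := by
    rw [← hG.submodule_iSup_eq_top]
    refine iSup_le fun j z hz => ?_
    rcases eq_or_ne j i with rfl | hji
    · change hG.proj j (f z) = f.restrict (hf j) (hG.proj j z)
      rw [hG.proj_apply_of_mem hz, hG.proj_apply_of_mem (hf j hz)]
      rfl
    · simp [hG.proj_apply_of_mem_ne hji hz, hG.proj_apply_of_mem_ne hji (hf j hz)]
  exact htop Submodule.mem_top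

noncomputable def supNorm (S : Finset ι) (N : ∀ i, G i → ℝ≥0) (y : V) : ℝ≥0 :=
  S.sup fun i => N i (hG.proj i y)

variable {hG} {v : AbsoluteValue L ℝ} {S : Finset ι} {N : ∀ i, G i → ℝ≥0}
  (hN : ∀ i, IsUltrametricNorm v (N i))
include hN

lemma isUltrametricNorm_supNorm (hS : ∀ i ∉ S, G i = ⊥) : IsUltrametricNorm v (hG.supNorm S N) :=
  .finset_sup hN S hG.proj fun y h => hG.eq_zero_of_forall_proj_eq_zero fun i => by
    by_cases hi : i ∈ S
    · exact h i hi
    · exact Subtype.ext ((Submodule.mem_bot L).1 (hS i hi ▸ (hG.proj i y).2))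

lemma supNorm_le_of_proj {y z : V} (h : ∀ i, hG.proj i y = 0 ∨ hG.proj i y = hG.proj i z) :
    hG.supNorm S N y ≤ hG.supNorm S N z :=
  Finset.sup_mono_fun fun i _ => by
    rcases h i with h | h
    · simp [h, (hN i).map_zero]
    · rw [h]

lemma supNorm_sum {R : Type*} (φ : ι → R) (hS : ∀ i ∉ S, G i = ⊥) (s : Finset R)
    (hs : s.Nonempty) (y : R → V) (hy : ∀ r ∈ s, y r ∈ ⨆ i ∈ {i | φ i = r}, G i) :
    hG.supNorm S N (∑ r ∈ s, y r) = s.sup' hs fun r => hG.supNorm S N (y r) := by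
  refine le_antisymm ((isUltrametricNorm_supNorm hN hS).isNonarchimedean.apply_sum_le_sup hs) ?_
  refine Finset.sup'_le hs _ fun r hr => supNorm_le_of_proj hN fun i => ?_
  by_cases hi : φ i = r
  · refine .inr ?_
    rw [map_sum, Finset.sum_eq_single_of_mem r hr fun r' hr' hne =>
      hG.proj_apply_eq_zero_of_mem_iSup (fun h => hne (h.symm.trans hi)) (hy r' hr')]
  · exact .inl (hG.proj_apply_eq_zero_of_mem_iSup hi (hy r hr))

lemma supNorm_map {R : Type*} (φ : ι → R) (c : R → ℝ≥0) {f : Module.End L V}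
    (hf : ∀ i, Set.MapsTo f (G i) (G i)) (hNf : ∀ i w, N i (f.restrict (hf i) w) = c (φ i) * N i w)
    {r : R} {y : V} (hy : y ∈ ⨆ i ∈ {i | φ i = r}, G i) :
    hG.supNorm S N (f y) = c r * hG.supNorm S N y := by
  rw [supNorm, supNorm, NNReal.mul_finset_sup]
  refine Finset.sup_congr rfl fun i _ => ?_
  rw [hG.proj_apply_map hf, hNf]
  by_cases hi : φ i = r
  · rw [hi]
  · simp [hG.proj_apply_eq_zero_of_mem_iSup hi hy, (hN i).map_zero]

end DirectSum.IsInternal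

section Spectral

variable {L V : Type*} [Field L] [AddCommGroup V] [Module L V]

noncomputable def absEigenspace (v : AbsoluteValue L ℝ) (β : Module.End L V) (ρ : ℝ) :
    Submodule L V :=
  ⨆ μ ∈ {μ : L | v μ = ρ}, β.maxGenEigenspace μ

variable [IsAlgClosed L] [FiniteDimensional L V] {v : AbsoluteValue L ℝ}

theorem exists_adapted_isUltrametricNorm (hv : IsNonarchimedean v) {β : Module.End L V}
    (hβ : Function.Injective β) :
    ∃ N : V → ℝ≥0, IsUltrametricNorm v N ∧
      (∀ ρ, ∀ y ∈ absEigenspace v β ρ, N (β y) = ρ.toNNReal * N y) ∧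
      ∀ (s : Finset ℝ) (hs : s.Nonempty) (y : ℝ → V), (∀ ρ ∈ s, y ρ ∈ absEigenspace v β ρ) →
        N (∑ ρ ∈ s, y ρ) = s.sup' hs fun ρ => N (y ρ) := by
  classical
  have hG : DirectSum.IsInternal β.maxGenEigenspace :=
    DirectSum.isInternal_submodule_of_iSupIndep_of_iSup_eq_top
      β.independent_maxGenEigenspace β.iSup_maxGenEigenspace_eq_top
  have hmaps (μ : L) : Set.MapsTo β (β.maxGenEigenspace μ) (β.maxGenEigenspace μ) :=
    Module.End.mapsTo_maxGenEigenspace_of_comm (Commute.refl β) μ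
  have hnorm (μ : L) : ∃ N : β.maxGenEigenspace μ → ℝ≥0, IsUltrametricNorm v N ∧
      ∀ w, N (β.restrict (hmaps μ) w) = (v μ).toNNReal * N w := by
    refine exists_isUltrametricNorm_apply_eq_mul hv
      (fun a b h => Subtype.ext (hβ (congrArg Subtype.val h))) ?_
    convert β.isNilpotent_restrict_maxGenEigenspace_sub_algebraMap μ using 1
    ext
    rfl
  choose N hN hNβ using hnorm
  set S := β.finite_hasEigenvalue.toFinset
  have hS : ∀ μ ∉ S, β.maxGenEigenspace μ = ⊥ := fun μ hμ => by
    by_contra h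
    exact hμ (β.finite_hasEigenvalue.mem_toFinset.2
      ((Module.End.hasUnifEigenvalue_iff_hasUnifEigenvalue_one (by simp)).1 h))
  exact ⟨hG.supNorm S N, hG.isUltrametricNorm_supNorm hN hS,
    fun ρ y hy => hG.supNorm_map hN v (fun ρ => ρ.toNNReal) hmaps hNβ hy,
    fun s hs y hy => hG.supNorm_sum hN v hS s hs y hy⟩

end Spectral

theorem exists_adapted_norm_general {K : Type*} [NontriviallyNormedField K]
    {E : Type*} [AddCommGroup E] [Module K E] [FiniteDimensional K E]
    (v : AbsoluteValue (AlgebraicClosure K) ℝ)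
    (hvext : ∀ t : K, v (algebraMap K (AlgebraicClosure K) t) = ‖t‖)
    (hvultra : ∀ a b : AlgebraicClosure K, v (a + b) ≤ max (v a) (v b))
    (α : E ≃ₗ[K] E) :
    (∃ N : E → ℝ,
      (∀ x, 0 ≤ N x) ∧ (∀ x, N x = 0 ↔ x = 0) ∧
      (∀ (t : K) (x : E), N (t • x) = ‖t‖ * N x) ∧
      (∀ x y : E, N (x + y) ≤ max (N x) (N y)) ∧
      (∀ (s : Finset ℝ) (hs : s.Nonempty) (f : ℝ → E),
        (∀ ρ ∈ s, f ρ ∈ specSubspace v (α : E →ₗ[K] E) ρ) →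
        N (∑ ρ ∈ s, f ρ) = s.sup' hs fun ρ => N (f ρ)) ∧
      (∀ ρ ∈ eigAbs v (α : E →ₗ[K] E), ∀ x ∈ specSubspace v (α : E →ₗ[K] E) ρ,
        N (α x) = ρ * N x)) ∧
    (∀ ρ ∈ eigAbs v (α : E →ₗ[K] E), ∃ Nρ : E → ℝ,
      (∀ x ∈ specSubspace v (α : E →ₗ[K] E) ρ, 0 ≤ Nρ x) ∧
      (∀ x ∈ specSubspace v (α : E →ₗ[K] E) ρ, (Nρ x = 0 ↔ x = 0)) ∧
      (∀ (t : K), ∀ x ∈ specSubspace v (α : E →ₗ[K] E) ρ, Nρ (t • x) = ‖t‖ * Nρ x) ∧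
      (∀ x ∈ specSubspace v (α : E →ₗ[K] E) ρ, ∀ y ∈ specSubspace v (α : E →ₗ[K] E) ρ,
        Nρ (x + y) ≤ max (Nρ x) (Nρ y)) ∧
      (∀ x ∈ specSubspace v (α : E →ₗ[K] E) ρ, Nρ (α x) = ρ * Nρ x)) := by
  obtain ⟨N, hN, hNβ, hNsum⟩ := exists_adapted_isUltrametricNorm hvultra
    (α.baseChange K (AlgebraicClosure K) E E).injective
  set NE : E → ℝ := fun x => N (1 ⊗ₜ x)
  have hNE_eq_zero (x : E) : NE x = 0 ↔ x = 0 := by 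
    simp only [NE, NNReal.coe_eq_zero, hN.eq_zero_iff, Module.FaithfullyFlat.one_tmul_eq_zero_iff]
  have hNE_smul (t : K) (x : E) : NE (t • x) = ‖t‖ * NE x := by
    rw [← hvext, ← hN.coe_map_smul, algebraMap_smul, ← TensorProduct.tmul_smul]
  have hNE_add (x y : E) : NE (x + y) ≤ max (NE x) (NE y) := by
    simpa [NE, TensorProduct.tmul_add] using hN.isNonarchimedean _ _
  have hNE_α (ρ : ℝ) (hρ : ρ ∈ eigAbs v (α : E →ₗ[K] E)) (x : E)
      (hx : x ∈ specSubspace v (α : E →ₗ[K] E) ρ) : NE (α x) = ρ * NE x := by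
    obtain ⟨μ, -, rfl⟩ := hρ
    simpa [NE, Real.coe_toNNReal _ (v.nonneg μ)] using congrArg NNReal.toReal (hNβ _ _ hx)
  refine ⟨⟨NE, fun x => (N _).coe_nonneg, hNE_eq_zero, hNE_smul, hNE_add, fun s hs f hf => ?_,
    hNE_α⟩, fun ρ hρ => ⟨NE, fun x _ => (N _).coe_nonneg, fun x _ => hNE_eq_zero x,
      fun t x _ => hNE_smul t x, fun x _ y _ => hNE_add x y, hNE_α ρ hρ⟩⟩
  simp only [NE, TensorProduct.tmul_sum]
  rw [hNsum s hs (fun ρ => 1 ⊗ₜ f ρ) hf]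
  exact Finset.apply_sup'_eq_sup'_comp hs _ NNReal.coe_max

/-- Every linear automorphism `α` of a finite-dimensional vector space `E` over a complete
ultrametric field admits an adapted norm; in particular, each `E_ρ` (`ρ ∈ R(α)`) carries an
ultrametric norm with `‖α(x)‖_ρ = ρ·‖x‖_ρ`. -/
theorem exists_adapted_norm {K : Type*} [NontriviallyNormedField K] [IsUltrametricDist K]
    [CompleteSpace K] {E : Type*} [AddCommGroup E] [Module K E] [FiniteDimensional K E]
    (v : AbsoluteValue (AlgebraicClosure K) ℝ)
    (hvext : ∀ t : K, v (algebraMap K (AlgebraicClosure K) t) = ‖t‖)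
    (hvultra : ∀ a b : AlgebraicClosure K, v (a + b) ≤ max (v a) (v b))
    (α : E ≃ₗ[K] E) :
    (∃ N : E → ℝ,
      (∀ x, 0 ≤ N x) ∧ (∀ x, N x = 0 ↔ x = 0) ∧
      (∀ (t : K) (x : E), N (t • x) = ‖t‖ * N x) ∧
      (∀ x y : E, N (x + y) ≤ max (N x) (N y)) ∧
      (∀ (s : Finset ℝ) (hs : s.Nonempty) (f : ℝ → E),
        (∀ ρ ∈ s, f ρ ∈ specSubspace v (α : E →ₗ[K] E) ρ) →
        N (∑ ρ ∈ s, f ρ) = s.sup' hs fun ρ => N (f ρ)) ∧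
      (∀ ρ ∈ eigAbs v (α : E →ₗ[K] E), ∀ x ∈ specSubspace v (α : E →ₗ[K] E) ρ,
        N (α x) = ρ * N x)) ∧
    (∀ ρ ∈ eigAbs v (α : E →ₗ[K] E), ∃ Nρ : E → ℝ,
      (∀ x ∈ specSubspace v (α : E →ₗ[K] E) ρ, 0 ≤ Nρ x) ∧
      (∀ x ∈ specSubspace v (α : E →ₗ[K] E) ρ, (Nρ x = 0 ↔ x = 0)) ∧
      (∀ (t : K), ∀ x ∈ specSubspace v (α : E →ₗ[K] E) ρ, Nρ (t • x) = ‖t‖ * Nρ x) ∧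
      (∀ x ∈ specSubspace v (α : E →ₗ[K] E) ρ, ∀ y ∈ specSubspace v (α : E →ₗ[K] E) ρ,
        Nρ (x + y) ≤ max (Nρ x) (Nρ y)) ∧
      (∀ x ∈ specSubspace v (α : E →ₗ[K] E) ρ, Nρ (α x) = ρ * Nρ x)) :=
  exists_adapted_norm_general v hvext hvultra α
end

section
/- Let α be a linear automorphism of a finite-dimensional vector space E over a local field, and ‖·‖ a norm adapted to α. Then for every r > 0 the ball B_r = {x : ‖x‖ < r} is tidy for α: B_r = (B_r)_+ + (B_r)_−, where (B_r)_± = B_r ∩ E_± with E_+ = ⊕_{ρ≥1}E_ρ and E_− = ⊕_{ρ≤1}E_ρ, and the increasing union ⋃_{n≥0} αⁿ((B_r)_+) is closed in E. -/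
open Filter Topology
open scoped TensorProduct

/-!
Over the algebraic closure, `E` is the sum of the generalized eigenspaces of `α`. Grouping
eigenvalues by absolute value descends to `K`, because the roots of an irreducible polynomial over
`K` are conjugate and an absolute value extending that of the complete field `K` takes the same
value at conjugates; hence `E` is the sum of the `E_ρ`. For an adapted norm, `‖αⁿ x‖` is the
maximum of the `ρⁿ ‖x_ρ‖` over the components `x_ρ` of `x`, which gives `(B_r)_± = B_r ∩ E_±` and
`B_r = (B_r)_+ + (B_r)_-`. Finally `⋃ αⁿ((B_r)_+)` is closed under addition, lies in the closed
subspace `E_+` and contains its `r`-ball, so a point of its closure differs from one of its elements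
by an element of that ball.
-/

open Polynomial

section BiSup

variable {R M ι : Type*} [Semiring R] [AddCommMonoid M] [Module R M] {V : ι → Submodule R M}
  {T : Set ι}

theorem Submodule.exists_finset_sum_of_mem_biSup {x : M} (hx : x ∈ ⨆ i ∈ T, V i) :
    ∃ (s : Finset ι) (f : ι → M), ↑s ⊆ T ∧ (∀ i ∈ s, f i ∈ V i) ∧ ∑ i ∈ s, f i = x := by
  obtain ⟨f, hf, rfl⟩ := (Submodule.mem_iSup_iff_exists_finsupp _ x).1 hx
  refine ⟨f.support, f, fun i hi => ?_, fun i _ => (iSup_le fun _ => le_rfl : _ ≤ V i) (hf i), rfl⟩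
  by_contra hiT
  have hfi := hf i
  rw [iSup_neg hiT, Submodule.mem_bot] at hfi
  exact Finsupp.mem_support_iff.1 hi hfi

theorem Submodule.sum_filter_mem_biSup {s : Finset ι} {f : ι → M}
    (hsT : ↑s ⊆ T) (hf : ∀ i ∈ s, f i ∈ V i) (p : ι → Prop) [DecidablePred p] :
    ∑ i ∈ s with p i, f i ∈ ⨆ i ∈ {i ∈ T | p i}, V i :=
  Submodule.sum_mem _ fun i hi => by
    rw [Finset.mem_filter] at hi
    exact Submodule.mem_iSup_of_mem i (Submodule.mem_iSup_of_mem ⟨hsT hi.1, hi.2⟩ (hf i hi.1))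

theorem Submodule.apply_mem_biSup {g : M →ₗ[R] M} (hg : ∀ i ∈ T, ∀ y ∈ V i, g y ∈ V i)
    {x : M} (hx : x ∈ ⨆ i ∈ T, V i) : g x ∈ ⨆ i ∈ T, V i :=
  (iSup₂_le fun i hi y hy =>
    mem_iSup_of_mem i (mem_iSup_of_mem hi (hg i hi y hy)) : _ ≤ (⨆ i ∈ T, V i).comap g) hx

end BiSup

theorem Polynomial.ker_aeval_prod_le_iSup_ker_aeval {R M ι : Type*} [CommRing R] [AddCommGroup M]
    [Module R M] (f : Module.End R M) (s : Finset ι) (q : ι → R[X])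
    (hq : (s : Set ι).Pairwise fun i j => IsCoprime (q i) (q j)) :
    LinearMap.ker (aeval f (∏ i ∈ s, q i)) ≤ ⨆ i ∈ s, LinearMap.ker (aeval f (q i)) := by
  classical
  induction s using Finset.induction_on with
  | empty => simp [Module.End.one_eq_id]
  | insert a s ha ih =>
    rw [Finset.prod_insert ha, ← sup_ker_aeval_eq_ker_aeval_mul_of_coprime f
      (IsCoprime.prod_right fun j hj => hq (by simp) (by simp [hj]) (by rintro rfl; exact ha hj)),
      Finset.iSup_insert]
    exact sup_le_sup_left (ih (hq.mono (by simp))) _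

theorem Module.End.ker_aeval_le_iSup_maxGenEigenspace {L M : Type*} [Field L] [IsAlgClosed L]
    [AddCommGroup M] [Module L M] (f : Module.End L M) {p : L[X]} (hp : p ≠ 0) :
    LinearMap.ker (aeval f p) ≤ ⨆ μ ∈ p.roots, f.maxGenEigenspace μ := by
  classical
  have hfactor : p = C p.leadingCoeff *
      ∏ μ ∈ p.roots.toFinset, (X - C μ) ^ rootMultiplicity μ p := by
    rw [← prod_multiset_root_eq_finset_root]
    exact (IsAlgClosed.splits p).eq_prod_roots
  have hker_pow (μ : L) (k : ℕ) :
      LinearMap.ker (aeval f ((X - C μ) ^ k)) ≤ f.maxGenEigenspace μ := fun x hx =>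
    (f.mem_maxGenEigenspace μ x).2
      ⟨k, by simpa [Module.algebraMap_end_eq_smul_id, Module.End.one_eq_id] using hx⟩
  intro x hx
  rw [hfactor, LinearMap.mem_ker, map_mul, aeval_C, Module.End.mul_apply,
    Module.algebraMap_end_apply, smul_eq_zero_iff_right (leadingCoeff_ne_zero.2 hp)] at hx
  refine (iSup₂_le fun μ hμ => (hker_pow μ _).trans ?_) (ker_aeval_prod_le_iSup_ker_aeval f _ _
    (fun μ _ ν _ hμν => (pairwise_coprime_X_sub_C Function.injective_id hμν).pow) hx)
  exact le_iSup₂_of_le μ (Multiset.mem_toFinset.1 hμ) le_rfl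

theorem TensorProduct.mk_one_injective (K L E : Type*) [Field K] [Field L] [Algebra K L]
    [AddCommGroup E] [Module K E] : Function.Injective (TensorProduct.mk K L E 1) := by
  convert (Module.Flat.rTensor_preserves_injective_linearMap (M := E) (Algebra.linearMap K L)
    (algebraMap K L).injective).comp (TensorProduct.lid K E).symm.injective
  ext; simp

section ConjugateRoots

variable {K L : Type*} [NontriviallyNormedField K] [CompleteSpace K] [Field L] [Algebra K L]
  (v : AbsoluteValue L ℝ)

theorem AbsoluteValue.apply_algHom_le (hv : ∀ t : K, v (algebraMap K L t) = ‖t‖)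
    (F : IntermediateField K L) [FiniteDimensional K F] (σ : F →ₐ[K] L) (x : F) :
    v (σ x) ≤ v x := by
  let _ : NormedField L := v.toNormedField
  have norm_smul (c : K) (y : L) : ‖c • y‖ = ‖c‖ * ‖y‖ := by
    change v (c • y) = ‖c‖ * v y
    rw [Algebra.smul_def, map_mul, hv]
  let _ : NormedSpace K L := ⟨fun c y => (norm_smul c y).le⟩
  let _ : NormedSpace K F := ⟨fun c y => (norm_smul c y).le⟩
  obtain ⟨C, hC, hbound⟩ := (LinearMap.toContinuousLinearMap σ.toLinearMap).bound
  exact contraction_of_isPowMul (fun y n _ => norm_pow y n) ⟨C, hC, hbound⟩ x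

theorem IsConjRoot.absoluteValue_le (hv : ∀ t : K, v (algebraMap K L t) = ‖t‖) {x y : L}
    (hx : IsIntegral K x) (h : IsConjRoot K x y) : v y ≤ v x := by
  have := IntermediateField.adjoin.finiteDimensional hx
  let σ := (IntermediateField.algHomAdjoinIntegralEquiv K hx).symm
    ⟨y, mem_aroots.2 ⟨minpoly.ne_zero hx, h.aeval_eq_zero⟩⟩
  simpa [σ, IntermediateField.algHomAdjoinIntegralEquiv_symm_apply_gen] using
    v.apply_algHom_le hv _ σ (IntermediateField.AdjoinSimple.gen K x)

theorem IsConjRoot.absoluteValue_eq (hv : ∀ t : K, v (algebraMap K L t) = ‖t‖) {x y : L}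
    (hx : IsIntegral K x) (h : IsConjRoot K x y) : v x = v y :=
  le_antisymm (h.symm.absoluteValue_le v hv (h.isIntegral hx)) (h.absoluteValue_le v hv hx)

end ConjugateRoots

section SpectralSubspaces

variable {K : Type*} [NontriviallyNormedField K] {E : Type*} [AddCommGroup E] [Module K E]
  (v : AbsoluteValue (AlgebraicClosure K) ℝ)

theorem aeval_baseChangeEnd_map_one_tmul (α : E →ₗ[K] E) (p : K[X]) (x : E) :
    aeval (baseChangeEnd α) (p.map (algebraMap K (AlgebraicClosure K))) (1 ⊗ₜ x) =
      1 ⊗ₜ aeval α p x := by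
  rw [aeval_map_algebraMap]
  change aeval (Module.End.baseChangeHom K (AlgebraicClosure K) E α) p _ = _
  rw [aeval_algHom_apply]
  rfl

theorem ker_aeval_le_specSubspace (α : E →ₗ[K] E) {p : K[X]} (hp : p ≠ 0) {ρ : ℝ}
    (hroots : ∀ μ ∈ p.aroots (AlgebraicClosure K), v μ = ρ) :
    LinearMap.ker (aeval α p) ≤ specSubspace v α ρ := by
  intro x hx
  rw [specSubspace, Submodule.mem_comap, Submodule.restrictScalars_mem]
  have h1 : (1 ⊗ₜ x : AlgebraicClosure K ⊗[K] E) ∈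
      LinearMap.ker (aeval (baseChangeEnd α) (p.map (algebraMap K (AlgebraicClosure K)))) := by
    rw [LinearMap.mem_ker, aeval_baseChangeEnd_map_one_tmul, LinearMap.mem_ker.1 hx,
      TensorProduct.tmul_zero]
  exact iSup₂_mono' (f := fun μ _ => (baseChangeEnd α).maxGenEigenspace μ)
    (fun μ hμ => ⟨μ, hroots μ hμ, le_rfl⟩)
    ((baseChangeEnd α).ker_aeval_le_iSup_maxGenEigenspace (map_ne_zero hp) h1)

theorem iSup_specSubspace_eq_top [CompleteSpace K] [FiniteDimensional K E]
    (hv : ∀ t : K, v (algebraMap K (AlgebraicClosure K) t) = ‖t‖) (α : E →ₗ[K] E) :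
    ⨆ ρ, specSubspace v α ρ = ⊤ := by
  suffices h : ∀ q : K[X], q ≠ 0 → LinearMap.ker (aeval α q) ≤ ⨆ ρ, specSubspace v α ρ by
    simpa [LinearMap.aeval_self_charpoly] using h α.charpoly α.charpoly_monic.ne_zero
  intro q
  induction q using UniqueFactorizationMonoid.induction_on_coprime with
  | h0 => exact fun h => (h rfl).elim
  | h1 hu =>
    intro _
    rw [← hu.unit_spec, Module.End.ker_aeval_ring_hom'_unit_polynomial]
    exact bot_le
  | @hpr p i hp =>
    intro hpi
    have hconj {μ ν : AlgebraicClosure K} (hμ : aeval μ p = 0) (hν : aeval ν p = 0) :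
        v μ = v ν := by
      refine IsConjRoot.absoluteValue_eq v hv (Algebra.IsIntegral.isIntegral μ) ?_
      refine isConjRoot_of_aeval_eq_zero (Algebra.IsIntegral.isIntegral μ) ?_
      rw [← minpoly.eq_of_irreducible hp.irreducible hμ, map_mul, hν, zero_mul]
    have hroot {μ} (hμ : μ ∈ (p ^ i).aroots (AlgebraicClosure K)) : aeval μ p = 0 :=
      eq_zero_of_pow_eq_zero ((map_pow (aeval μ) p i) ▸ (mem_aroots.1 hμ).2)
    by_cases hempty : (p ^ i).aroots (AlgebraicClosure K) = 0
    · exact ker_aeval_le_specSubspace v α hpi (ρ := 0) (by simp [hempty]) |>.trans (le_iSup _ _)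
    obtain ⟨μ₀, hμ₀⟩ := Multiset.exists_mem_of_ne_zero hempty
    exact (ker_aeval_le_specSubspace v α hpi fun μ hμ => hconj (hroot hμ) (hroot hμ₀)).trans
      (le_iSup _ _)
  | hcp hxy hx hy =>
    intro hq
    rw [← sup_ker_aeval_eq_ker_aeval_mul_of_coprime α hxy.isCoprime]
    exact sup_le (hx (left_ne_zero_of_mul hq)) (hy (right_ne_zero_of_mul hq))

theorem specSubspace_eq_bot_of_notMem_eigAbs (α : E →ₗ[K] E) {ρ : ℝ} (hρ : ρ ∉ eigAbs v α) :
    specSubspace v α ρ = ⊥ := by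
  have hbot : ⨆ μ ∈ {μ : AlgebraicClosure K | v μ = ρ}, (baseChangeEnd α).maxGenEigenspace μ = ⊥ :=
    iSup₂_eq_bot.2 fun μ hμ => by
      by_contra hne
      exact hρ ⟨μ, (Module.End.hasUnifEigenvalue_iff_hasUnifEigenvalue_one (by simp)).1 hne, hμ⟩
  rw [specSubspace, hbot, Submodule.restrictScalars_bot, Submodule.comap_bot,
    LinearMap.ker_eq_bot.2 (TensorProduct.mk_one_injective K _ E)]

theorem iSup_eigAbs_specSubspace_eq_top [CompleteSpace K] [FiniteDimensional K E]
    (hv : ∀ t : K, v (algebraMap K (AlgebraicClosure K) t) = ‖t‖) (α : E →ₗ[K] E) :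
    ⨆ ρ ∈ eigAbs v α, specSubspace v α ρ = ⊤ := by
  refine eq_top_iff.2 ((iSup_specSubspace_eq_top v hv α).ge.trans (iSup_le fun ρ => ?_))
  by_cases hρ : ρ ∈ eigAbs v α
  · exact le_iSup₂_of_le ρ hρ le_rfl
  · simp [specSubspace_eq_bot_of_notMem_eigAbs v α hρ]

theorem apply_mem_specSubspace_of_commute {α β : E →ₗ[K] E} (h : Commute β α) {ρ : ℝ} {x : E}
    (hx : x ∈ specSubspace v α ρ) : β x ∈ specSubspace v α ρ := by
  have hB : Commute (baseChangeEnd α) (baseChangeEnd β) :=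
    (h.map (Module.End.baseChangeHom K (AlgebraicClosure K) E)).symm
  rw [specSubspace, Submodule.mem_comap, Submodule.restrictScalars_mem] at hx ⊢
  exact Submodule.apply_mem_biSup
    (fun μ _ _ hy => Module.End.mapsTo_maxGenEigenspace_of_comm hB μ hy) hx

theorem pos_of_mem_eigAbs (α : E ≃ₗ[K] E) {ρ : ℝ} (hρ : ρ ∈ eigAbs v (α : E →ₗ[K] E)) : 0 < ρ := by
  obtain ⟨μ, hμ, rfl⟩ := hρ
  refine v.pos fun hμ0 => ?_
  obtain ⟨z, hz⟩ := (hμ0 ▸ hμ).exists_hasEigenvector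
  have hz0 : baseChangeEnd (α : E →ₗ[K] E) z = 0 := by simpa using hz.apply_eq_smul
  exact hz.2 ((α.baseChange K (AlgebraicClosure K) E E).map_eq_zero_iff.1 hz0)

end SpectralSubspaces

section SupNormFamily

variable {K E ι : Type*} [Semiring K] [NormedAddCommGroup E] [Module K E]

def IsSupNormFamily (V : ι → Submodule K E) : Prop :=
  ∀ (s : Finset ι) (hs : s.Nonempty) (f : ι → E), (∀ i ∈ s, f i ∈ V i) →
    ‖∑ i ∈ s, f i‖ = s.sup' hs fun i => ‖f i‖

theorem LinearEquiv.pow_apply_mem_and_norm_eq (β : E ≃ₗ[K] E) {W : Submodule K E} {c : ℝ}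
    (hW : ∀ y ∈ W, β y ∈ W ∧ ‖β y‖ = c * ‖y‖) (n : ℕ) {y : E} (hy : y ∈ W) :
    (β ^ n) y ∈ W ∧ ‖(β ^ n) y‖ = c ^ n * ‖y‖ := by
  induction n with
  | zero => simpa using hy
  | succ n ih =>
    rw [pow_succ', LinearEquiv.mul_apply, (hW _ ih.1).2, ih.2, pow_succ']
    exact ⟨(hW _ ih.1).1, (mul_assoc _ _ _).symm⟩

namespace IsSupNormFamily

variable {V : ι → Submodule K E} (hV : IsSupNormFamily V)
include hV

theorem norm_le_norm_sum {s : Finset ι} {f : ι → E} (hf : ∀ i ∈ s, f i ∈ V i) {i : ι}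
    (hi : i ∈ s) : ‖f i‖ ≤ ‖∑ j ∈ s, f j‖ := by
  rw [hV s ⟨i, hi⟩ f hf]
  exact Finset.le_sup' (fun j => ‖f j‖) hi

theorem norm_sum_le {s : Finset ι} {f : ι → E} (hf : ∀ i ∈ s, f i ∈ V i) {C : ℝ} (hC : 0 ≤ C)
    (h : ∀ i ∈ s, ‖f i‖ ≤ C) : ‖∑ i ∈ s, f i‖ ≤ C := by
  rcases s.eq_empty_or_nonempty with rfl | hs
  · simpa using hC
  · rw [hV s hs f hf]
    exact Finset.sup'_le hs _ h

theorem norm_apply_le_of_mem_biSup {T : Set ι} {g : E →ₗ[K] E}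
    (hg : ∀ i ∈ T, ∀ y ∈ V i, g y ∈ V i ∧ ‖g y‖ ≤ ‖y‖) {x : E} (hx : x ∈ ⨆ i ∈ T, V i) :
    ‖g x‖ ≤ ‖x‖ := by
  obtain ⟨s, f, hsT, hf, rfl⟩ := Submodule.exists_finset_sum_of_mem_biSup hx
  rw [map_sum]
  exact hV.norm_sum_le (fun i hi => (hg i (hsT hi) _ (hf i hi)).1) (norm_nonneg _)
    fun i hi => (hg i (hsT hi) _ (hf i hi)).2.trans (hV.norm_le_norm_sum hf hi)

theorem exists_add_eq_of_mem_biSup {T : Set ι} (p : ι → Prop) {x : E}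
    (hx : x ∈ ⨆ i ∈ T, V i) :
    ∃ u ∈ ⨆ i ∈ {i ∈ T | p i}, V i, ∃ w ∈ ⨆ i ∈ {i ∈ T | ¬ p i}, V i,
      x = u + w ∧ ‖u‖ ≤ ‖x‖ ∧ ‖w‖ ≤ ‖x‖ := by
  classical
  obtain ⟨s, f, hsT, hf, rfl⟩ := Submodule.exists_finset_sum_of_mem_biSup hx
  have hpart (q : ι → Prop) [DecidablePred q] :
      ∑ i ∈ s with q i, f i ∈ ⨆ i ∈ {i ∈ T | q i}, V i ∧
        ‖∑ i ∈ s with q i, f i‖ ≤ ‖∑ i ∈ s, f i‖ := by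
    refine ⟨Submodule.sum_filter_mem_biSup hsT hf q, hV.norm_sum_le
      (fun i hi => hf i (Finset.mem_of_mem_filter i hi)) (norm_nonneg _)
      fun i hi => hV.norm_le_norm_sum hf (Finset.mem_of_mem_filter i hi)⟩
  exact ⟨_, (hpart p).1, _, (hpart fun i => ¬ p i).1,
    (Finset.sum_filter_add_sum_filter_not s p f).symm, (hpart p).2, (hpart _).2⟩

theorem setOf_forall_pow_apply_mem_ball {T : Set ι} (htop : ⨆ i ∈ T, V i = ⊤)
    (β : E ≃ₗ[K] E) (c : ι → ℝ) (hc : ∀ i ∈ T, 0 ≤ c i)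
    (hβ : ∀ i ∈ T, ∀ y ∈ V i, β y ∈ V i ∧ ‖β y‖ = c i * ‖y‖) (r : ℝ) :
    {x : E | ∀ n : ℕ, (β ^ n) x ∈ {y : E | ‖y‖ < r}} =
      {y : E | ‖y‖ < r} ∩ ↑(⨆ i ∈ {i ∈ T | c i ≤ 1}, V i) := by
  classical
  have hpow {i : ι} (hi : i ∈ T) (n : ℕ) {y : E} (hy : y ∈ V i) :=
    β.pow_apply_mem_and_norm_eq (hβ i hi) n hy
  ext x
  refine ⟨fun hx => ⟨by simpa using hx 0, ?_⟩, fun ⟨hxr, hxT⟩ n => ?_⟩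
  · obtain ⟨s, f, hsT, hf, rfl⟩ :=
      Submodule.exists_finset_sum_of_mem_biSup (htop ▸ Submodule.mem_top : x ∈ ⨆ i ∈ T, V i)
    -- a nonzero component on which `β` expands would make `‖βⁿ x‖` unbounded
    have hcomp : ∀ i ∈ s, f i ≠ 0 → c i ≤ 1 := by
      intro i hi hfi
      by_contra! hci
      obtain ⟨n, hn⟩ := ((tendsto_pow_atTop_atTop_of_one_lt hci).atTop_mul_const
        (norm_pos_iff.2 hfi) |>.eventually_gt_atTop r).exists
      have hle := hV.norm_le_norm_sum (f := fun j => (β ^ n) (f j))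
        (fun j hj => (hpow (hsT hj) n (hf j hj)).1) hi
      rw [(hpow (hsT hi) n (hf i hi)).2, ← map_sum] at hle
      exact (hn.trans_le hle).not_gt (hx n)
    rw [← Finset.sum_filter_of_ne hcomp]
    exact Submodule.sum_filter_mem_biSup hsT hf _
  · refine lt_of_le_of_lt (hV.norm_apply_le_of_mem_biSup (g := ((β ^ n : E ≃ₗ[K] E) : E →ₗ[K] E))
      (fun i hi y hy => ⟨(hpow hi.1 n hy).1, ?_⟩) hxT) hxr
    rw [LinearEquiv.coe_coe, (hpow hi.1 n hy).2]
    exact mul_le_of_le_one_left (norm_nonneg _) (pow_le_one₀ (hc i hi.1) hi.2)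

theorem setOf_norm_lt_eq_add [LinearOrder ι] (hult : ∀ x y : E, ‖x + y‖ ≤ max ‖x‖ ‖y‖)
    {T : Set ι} (htop : ⨆ i ∈ T, V i = ⊤) (a : ι) (r : ℝ) :
    {y : E | ‖y‖ < r} =
      {z : E | ∃ u ∈ {y : E | ‖y‖ < r} ∩ ↑(⨆ i ∈ {i ∈ T | a ≤ i}, V i),
        ∃ w ∈ {y : E | ‖y‖ < r} ∩ ↑(⨆ i ∈ {i ∈ T | i ≤ a}, V i), z = u + w} := by
  ext z
  refine ⟨fun hz => ?_, ?_⟩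
  · obtain ⟨u, hu, w, hw, rfl, hun, hwn⟩ :=
      hV.exists_add_eq_of_mem_biSup (a ≤ ·) (htop ▸ Submodule.mem_top : z ∈ ⨆ i ∈ T, V i)
    refine ⟨u, ⟨hun.trans_lt hz, hu⟩, w, ⟨hwn.trans_lt hz, ?_⟩, rfl⟩
    exact SetLike.le_def.1 (biSup_mono fun i hi => ⟨hi.1, (not_le.1 hi.2).le⟩) hw
  · rintro ⟨u, hu, w, hw, rfl⟩
    exact (hult u w).trans_lt (max_lt hu.1 hw.1)

end IsSupNormFamily

theorem IsSupNormFamily.setOf_forall_inv_pow_apply_mem_ball {V : ℝ → Submodule K E}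
    (hV : IsSupNormFamily V) {T : Set ℝ} (htop : ⨆ ρ ∈ T, V ρ = ⊤) (α : E ≃ₗ[K] E) (hT : ∀ ρ ∈ T, 0 < ρ)
    (hα_inv : ∀ ρ ∈ T, ∀ y ∈ V ρ, α⁻¹ y ∈ V ρ) (hα : ∀ ρ ∈ T, ∀ y ∈ V ρ, ‖α y‖ = ρ * ‖y‖)
    (r : ℝ) :
    {x : E | ∀ n : ℕ, (α⁻¹ ^ n) x ∈ {y : E | ‖y‖ < r}} =
      {y : E | ‖y‖ < r} ∩ ↑(⨆ ρ ∈ {ρ ∈ T | 1 ≤ ρ}, V ρ) := by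
  have hset : {ρ ∈ T | 1 ≤ ρ} = {ρ ∈ T | ρ⁻¹ ≤ 1} :=
    Set.ext fun ρ => and_congr_right fun hρ => (inv_le_one₀ (hT ρ hρ)).symm
  rw [hset]
  refine hV.setOf_forall_pow_apply_mem_ball htop α⁻¹ (fun ρ => ρ⁻¹)
    (fun ρ hρ => inv_nonneg.2 (hT ρ hρ).le) (fun ρ hρ y hy => ⟨hα_inv ρ hρ y hy, ?_⟩) r
  have h := hα ρ hρ _ (hα_inv ρ hρ y hy)
  rw [show α (α⁻¹ y) = y from α.apply_symm_apply y] at h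
  rw [h, inv_mul_cancel_left₀ (hT ρ hρ).ne']

end SupNormFamily

theorem AddSubgroup.isClosed_of_add_mem_of_norm_lt_mem {E : Type*} [SeminormedAddCommGroup E]
    {S : AddSubgroup E} (hS : IsClosed (S : Set E)) {H : Set E} (hHS : H ⊆ S)
    (hadd : ∀ x ∈ H, ∀ y ∈ H, x + y ∈ H) {r : ℝ} (hr : 0 < r)
    (hball : ∀ z ∈ S, ‖z‖ < r → z ∈ H) : IsClosed H := by
  refine isClosed_of_closure_subset fun x hx => ?_
  obtain ⟨y, hyH, hxy⟩ := Metric.mem_closure_iff.1 hx r hr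
  have hxS : x ∈ S := closure_minimal hHS hS hx
  have hxyH : x - y ∈ H := hball _ (S.sub_mem hxS (hHS hyH)) (by rwa [← dist_eq_norm])
  simpa using hadd _ hxyH _ hyH

theorem isClosed_iUnion_image_pow_setOf_forall_inv_pow {K E : Type*} [Ring K]
    [NormedAddCommGroup E] [Module K E] (hult : ∀ x y : E, ‖x + y‖ ≤ max ‖x‖ ‖y‖)
    (α : E ≃ₗ[K] E) {S : Submodule K E} (hS : IsClosed (S : Set E))
    (hαS : ∀ n : ℕ, ∀ x ∈ S, (α ^ n) x ∈ S) {r : ℝ} (hr : 0 < r)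
    (hP : {x : E | ∀ m : ℕ, (α⁻¹ ^ m) x ∈ {y : E | ‖y‖ < r}} = {y : E | ‖y‖ < r} ∩ S) :
    IsClosed (⋃ n : ℕ, (fun x : E => (α ^ n) x) ''
      {x : E | ∀ m : ℕ, (α⁻¹ ^ m) x ∈ {y : E | ‖y‖ < r}}) := by
  set P := {x : E | ∀ m : ℕ, (α⁻¹ ^ m) x ∈ {y : E | ‖y‖ < r}}
  have hP_inv (k : ℕ) {p : E} (hp : p ∈ P) : (α⁻¹ ^ k) p ∈ P := fun m => by
    simpa only [pow_add, LinearEquiv.mul_apply] using hp (m + k)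
  have hP_add {p q : E} (hp : p ∈ P) (hq : q ∈ P) : p + q ∈ P := fun m => by
    change ‖(α⁻¹ ^ m) (p + q)‖ < r
    rw [map_add]
    exact (hult _ _).trans_lt (max_lt (hp m) (hq m))
  refine AddSubgroup.isClosed_of_add_mem_of_norm_lt_mem (S := S.toAddSubgroup) hS ?_ ?_ hr ?_
  · simp only [Set.iUnion_subset_iff, Set.image_subset_iff]
    exact fun n p hp => hαS n p (hP ▸ hp).2
  · simp only [Set.mem_iUnion, Set.mem_image]
    rintro _ ⟨n, p, hp, rfl⟩ _ ⟨m, q, hq, rfl⟩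
    refine ⟨n + m, _, hP_add (hP_inv m hp) (hP_inv n hq), ?_⟩
    rw [map_add, ← LinearEquiv.mul_apply, ← LinearEquiv.mul_apply]
    congr 2 <;> group
  · exact fun z hz hzr => Set.mem_iUnion.2 ⟨0, z, hP ▸ ⟨hzr, hz⟩, by simp⟩

theorem ball_tidy_for_linear_automorphism_general {K : Type*} [NontriviallyNormedField K]
    [CompleteSpace K]
    {E : Type*} [NormedAddCommGroup E] [NormedSpace K E] [FiniteDimensional K E]
    (v : AbsoluteValue (AlgebraicClosure K) ℝ)
    (hvext : ∀ t : K, v (algebraMap K (AlgebraicClosure K) t) = ‖t‖)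
    (α : E ≃ₗ[K] E)
    -- the norm of `E` is adapted to `α`:
    (hult : ∀ x y : E, ‖x + y‖ ≤ max ‖x‖ ‖y‖)
    (hmax : ∀ (s : Finset ℝ) (hs : s.Nonempty) (f : ℝ → E),
      (∀ ρ ∈ s, f ρ ∈ specSubspace v (α : E →ₗ[K] E) ρ) →
      ‖∑ ρ ∈ s, f ρ‖ = s.sup' hs fun ρ => ‖f ρ‖)
    (had : ∀ ρ ∈ eigAbs v (α : E →ₗ[K] E), ∀ x ∈ specSubspace v (α : E →ₗ[K] E) ρ,
      ‖α x‖ = ρ * ‖x‖)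
    (r : ℝ) (hr : 0 < r) :
    {x : E | ∀ n : ℕ, (α⁻¹ ^ n) x ∈ {y : E | ‖y‖ < r}} =
        {y : E | ‖y‖ < r} ∩
          ↑(⨆ ρ ∈ {ρ ∈ eigAbs v (α : E →ₗ[K] E) | 1 ≤ ρ},
              specSubspace v (α : E →ₗ[K] E) ρ) ∧
      {x : E | ∀ n : ℕ, (α ^ n) x ∈ {y : E | ‖y‖ < r}} =
        {y : E | ‖y‖ < r} ∩
          ↑(⨆ ρ ∈ {ρ ∈ eigAbs v (α : E →ₗ[K] E) | ρ ≤ 1},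
              specSubspace v (α : E →ₗ[K] E) ρ) ∧
      {y : E | ‖y‖ < r} =
        {z : E | ∃ u ∈ {x : E | ∀ n : ℕ, (α⁻¹ ^ n) x ∈ {y : E | ‖y‖ < r}},
          ∃ w ∈ {x : E | ∀ n : ℕ, (α ^ n) x ∈ {y : E | ‖y‖ < r}}, z = u + w} ∧
      IsClosed (⋃ n : ℕ,
        (fun x : E => (α ^ n) x) ''
          {x : E | ∀ m : ℕ, (α⁻¹ ^ m) x ∈ {y : E | ‖y‖ < r}}) := by
  have hV : IsSupNormFamily (specSubspace v (α : E →ₗ[K] E)) := hmax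
  have htop := iSup_eigAbs_specSubspace_eq_top v hvext (α : E →ₗ[K] E)
  have hpos : ∀ ρ ∈ eigAbs v (α : E →ₗ[K] E), 0 < ρ := fun ρ => pos_of_mem_eigAbs v α
  have hinv {g : E ≃ₗ[K] E} (hg : Commute g α) {ρ : ℝ} {y : E}
      (hy : y ∈ specSubspace v (α : E →ₗ[K] E) ρ) : g y ∈ specSubspace v (α : E →ₗ[K] E) ρ :=
    apply_mem_specSubspace_of_commute v
      (hg.map LinearEquiv.automorphismGroup.toLinearMapMonoidHom) hy
  have hplus := hV.setOf_forall_inv_pow_apply_mem_ball htop α hpos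
    (fun _ _ _ hy => hinv (Commute.refl α).inv_left hy) had r
  have hminus := hV.setOf_forall_pow_apply_mem_ball htop α (fun ρ => ρ)
    (fun ρ hρ => (hpos ρ hρ).le) (fun ρ hρ y hy => ⟨hinv (Commute.refl α) hy, had ρ hρ y hy⟩) r
  refine ⟨hplus, hminus, by rw [hplus, hminus]; exact hV.setOf_norm_lt_eq_add hult htop 1 r, ?_⟩
  exact isClosed_iUnion_image_pow_setOf_forall_inv_pow hult α
    (Submodule.closed_of_finiteDimensional _) (fun n _ hx => Submodule.apply_mem_biSup
      (fun _ _ _ hy => hinv ((Commute.refl α).pow_left n) hy) hx) hr hplus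

/-- For a linear automorphism `α` of a finite-dimensional vector space over a local field,
equipped with a norm adapted to `α`, every ball `B_r` is tidy for `α`:
`(B_r)_± = B_r ∩ E_±`, `B_r = (B_r)_+ + (B_r)_-`, and `⋃_{n≥0} αⁿ((B_r)_+)` is closed. -/
theorem ball_tidy_for_linear_automorphism {K : Type*} [NontriviallyNormedField K]
    [CompleteSpace K] [LocallyCompactSpace K] [TotallyDisconnectedSpace K]
    {E : Type*} [NormedAddCommGroup E] [NormedSpace K E] [FiniteDimensional K E]
    (v : AbsoluteValue (AlgebraicClosure K) ℝ)
    (hvext : ∀ t : K, v (algebraMap K (AlgebraicClosure K) t) = ‖t‖)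
    (α : E ≃ₗ[K] E)
    -- the norm of `E` is adapted to `α`:
    (hult : ∀ x y : E, ‖x + y‖ ≤ max ‖x‖ ‖y‖)
    (hmax : ∀ (s : Finset ℝ) (hs : s.Nonempty) (f : ℝ → E),
      (∀ ρ ∈ s, f ρ ∈ specSubspace v (α : E →ₗ[K] E) ρ) →
      ‖∑ ρ ∈ s, f ρ‖ = s.sup' hs fun ρ => ‖f ρ‖)
    (had : ∀ ρ ∈ eigAbs v (α : E →ₗ[K] E), ∀ x ∈ specSubspace v (α : E →ₗ[K] E) ρ,
      ‖α x‖ = ρ * ‖x‖)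
    (r : ℝ) (hr : 0 < r) :
    {x : E | ∀ n : ℕ, (α⁻¹ ^ n) x ∈ {y : E | ‖y‖ < r}} =
        {y : E | ‖y‖ < r} ∩
          ↑(⨆ ρ ∈ {ρ ∈ eigAbs v (α : E →ₗ[K] E) | 1 ≤ ρ},
              specSubspace v (α : E →ₗ[K] E) ρ) ∧
      {x : E | ∀ n : ℕ, (α ^ n) x ∈ {y : E | ‖y‖ < r}} =
        {y : E | ‖y‖ < r} ∩
          ↑(⨆ ρ ∈ {ρ ∈ eigAbs v (α : E →ₗ[K] E) | ρ ≤ 1},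
              specSubspace v (α : E →ₗ[K] E) ρ) ∧
      {y : E | ‖y‖ < r} =
        {z : E | ∃ u ∈ {x : E | ∀ n : ℕ, (α⁻¹ ^ n) x ∈ {y : E | ‖y‖ < r}},
          ∃ w ∈ {x : E | ∀ n : ℕ, (α ^ n) x ∈ {y : E | ‖y‖ < r}}, z = u + w} ∧
      IsClosed (⋃ n : ℕ,
        (fun x : E => (α ^ n) x) ''
          {x : E | ∀ m : ℕ, (α⁻¹ ^ m) x ∈ {y : E | ‖y‖ < r}}) :=
  ball_tidy_for_linear_automorphism_general v hvext α hult hmax had r hr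
end

section
/- Let G be a topological group in which every ascending union of closed subgroups is closed (e.g., G has an open subgroup satisfying the ascending chain condition on closed subgroups), with a countable decreasing neighbourhood basis at 1 consisting of open subgroups. Then for every automorphism α of G, the contraction group U_α is closed in G. -/
/-!
For each basic open subgroup `V m`, the points whose orbit under `α` lies in `V m` from time `n`
on form a closed subgroup (an intersection of preimages of the closed subgroup `V m` under the
continuous maps `α ^ k`), and these subgroups increase with `n`. The contraction group is the
intersection over `m` of their ascending unions, each of which is closed by hypothesis.
-/

open Filter Topology

namespace MulAut

variable {G : Type*} [Group G]

lemma coe_pow (α : MulAut G) (k : ℕ) : ⇑(α ^ k) = (⇑α)^[k] := by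
  induction k with
  | zero => rfl
  | succ k ih => rw [pow_succ', Function.iterate_succ', ← ih]; rfl

def tailComap (α : MulAut G) (V : Subgroup G) (n : ℕ) : Subgroup G :=
  ⨅ (k : ℕ) (_ : n ≤ k), V.comap (α ^ k).toMonoidHom

lemma mem_tailComap {α : MulAut G} {V : Subgroup G} {n : ℕ} {x : G} :
    x ∈ tailComap α V n ↔ ∀ k, n ≤ k → (α ^ k) x ∈ V := by
  simp [tailComap, Subgroup.mem_iInf]

lemma tailComap_mono (α : MulAut G) (V : Subgroup G) : Monotone (tailComap α V) :=
  fun _ _ hnn' _ hx => mem_tailComap.2 fun k hk => mem_tailComap.1 hx k (hnn'.trans hk)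

variable [TopologicalSpace G]

lemma isClosed_tailComap {α : MulAut G} (hα : Continuous α) {V : Subgroup G}
    (hV : IsClosed (V : Set G)) (n : ℕ) : IsClosed (tailComap α V n : Set G) := by
  have hpreimage : (tailComap α V n : Set G) = ⋂ (k : ℕ) (_ : n ≤ k), ⇑(α ^ k) ⁻¹' V := by
    ext x
    simp [mem_tailComap]
  rw [hpreimage]
  exact isClosed_biInter fun k _ => hV.preimage (by rw [coe_pow]; exact hα.iterate k)

lemma setOf_tendsto_pow_apply_one_eq_iInter_iUnion_tailComap (α : MulAut G)
    {V : ℕ → Subgroup G} (hV : (𝓝 (1 : G)).HasBasis (fun _ => True) fun m => (V m : Set G)) :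
    {x : G | Tendsto (fun k : ℕ => (α ^ k) x) atTop (𝓝 1)} =
      ⋂ m, ⋃ n, (tailComap α (V m) n : Set G) := by
  ext x
  simp [hV.tendsto_right_iff, mem_tailComap]

end MulAut

lemma Subgroup.nhds_one_hasBasis_of_isOpen {G : Type*} [Group G] [TopologicalSpace G]
    {V : ℕ → Subgroup G} (hVopen : ∀ n, IsOpen (V n : Set G))
    (hVbasis : ∀ W ∈ 𝓝 (1 : G), ∃ n, (V n : Set G) ⊆ W) :
    (𝓝 (1 : G)).HasBasis (fun _ => True) fun n => (V n : Set G) :=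
  ⟨fun W => ⟨fun hW => (hVbasis W hW).imp fun _ h => ⟨trivial, h⟩,
    fun ⟨n, _, hn⟩ => mem_of_superset ((hVopen n).mem_nhds (V n).one_mem) hn⟩⟩

theorem contraction_group_closed_general {G : Type*} [Group G] [TopologicalSpace G]
    [IsTopologicalGroup G]
    (hascend : ∀ H : ℕ → Subgroup G, Monotone H → (∀ n, IsClosed (H n : Set G)) →
      IsClosed (⋃ n, (H n : Set G)))
    (V : ℕ → Subgroup G)
    (hVopen : ∀ n, IsOpen (V n : Set G))
    (hVbasis : ∀ W ∈ 𝓝 (1 : G), ∃ n, (V n : Set G) ⊆ W)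
    (α : MulAut G) (hα : Continuous α) :
    IsClosed {x : G | Tendsto (fun k : ℕ => (α ^ k) x) atTop (𝓝 1)} := by
  rw [MulAut.setOf_tendsto_pow_apply_one_eq_iInter_iUnion_tailComap α
    (Subgroup.nhds_one_hasBasis_of_isOpen hVopen hVbasis)]
  exact isClosed_iInter fun m => hascend _ (MulAut.tailComap_mono α (V m))
    (MulAut.isClosed_tailComap hα ((V m).isClosed_of_isOpen (hVopen m)))

/-- If in a topological group `G` every ascending union of closed subgroups is closed, and
`G` has a decreasing sequence of open subgroups forming a basis of identity neighbourhoods,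
then the contraction group of any automorphism of `G` is closed. -/
theorem contraction_group_closed {G : Type*} [Group G] [TopologicalSpace G]
    [IsTopologicalGroup G]
    (hascend : ∀ H : ℕ → Subgroup G, Monotone H → (∀ n, IsClosed (H n : Set G)) →
      IsClosed (⋃ n, (H n : Set G)))
    (V : ℕ → Subgroup G)
    (hVopen : ∀ n, IsOpen (V n : Set G))
    (hVdec : ∀ n, V (n + 1) ≤ V n)
    (hVbasis : ∀ W ∈ 𝓝 (1 : G), ∃ n, (V n : Set G) ⊆ W)
    (α : MulAut G) (hα : Continuous α) (hα' : Continuous α.symm) :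
    IsClosed {x : G | Tendsto (fun k : ℕ => (α ^ k) x) atTop (𝓝 1)} :=
  contraction_group_closed_general hascend V hVopen hVbasis α hα
end

section
/- Let G be a topological group having an open subgroup V satisfying the ascending chain condition on closed subgroups (of V). Then for any ascending sequence H_1 ⊆ H_2 ⊆ ⋯ of closed subgroups of G, the union H = ⋃_n H_n is a closed subgroup of G. -/
/-!
Put `C n = Hₙ ∩ V`. These are closed subgroups of `V` (an open subgroup is closed), so the
chain stabilizes at some `C N`. The union `S = ⋃ Hₙ` is a subgroup because the chain is
ascending, and `S ∩ V = ⋃ C n = C N` is closed. A subgroup meeting an open subgroup in a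
closed set is closed: a point of `closure S` is brought into `V` by a translation by `S`,
where `closure S ∩ V ⊆ closure (S ∩ V) = S ∩ V`.
-/

open Pointwise

theorem Monotone.iSup_eq_of_stabilizes {α : Type*} [CompleteLattice α] {f : ℕ → α}
    (hf : Monotone f) {N : ℕ} (hN : ∀ n, N ≤ n → f n = f N) : ⨆ n, f n = f N :=
  le_antisymm
    (iSup_le fun n => (hf (le_max_left n N)).trans (hN _ (le_max_right n N)).le)
    (le_iSup f N)

theorem Subgroup.isClosed_of_isClosed_inf_of_isOpen {G : Type*} [Group G]
    [TopologicalSpace G] [IsTopologicalGroup G] (S V : Subgroup G) (hV : IsOpen (V : Set G))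
    (hSV : IsClosed ((S ⊓ V : Subgroup G) : Set G)) : IsClosed (S : Set G) := by
  refine closure_subset_iff_isClosed.mp fun x hx => ?_
  obtain ⟨s, ⟨v, hv, rfl⟩, hs⟩ :=
    mem_closure_iff.mp hx _ (hV.smul x) ⟨1, V.one_mem, mul_one x⟩
  have hx' : (x * v)⁻¹ * x ∈ S.topologicalClosure :=
    S.topologicalClosure.mul_mem (S.le_topologicalClosure (S.inv_mem hs)) hx
  have hxV : (x * v)⁻¹ * x ∈ V := by simpa using V.inv_mem hv
  have hmem : (x * v)⁻¹ * x ∈ S ⊓ V := by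
    rw [← SetLike.mem_coe, ← hSV.closure_eq]
    exact hV.closure_inter ⟨hx', hxV⟩
  simpa using S.mul_mem hs hmem.1

/-- If a topological group `G` has an open subgroup `V` satisfying the ascending chain
condition on closed subgroups of `V`, then any ascending union of closed subgroups of `G`
is a closed subgroup of `G`. -/
theorem ascending_union_closed_of_acc {G : Type*} [Group G] [TopologicalSpace G]
    [IsTopologicalGroup G] (V : Subgroup G) (hVopen : IsOpen (V : Set G))
    (hacc : ∀ C : ℕ → Subgroup G, Monotone C → (∀ n, C n ≤ V) →
      (∀ n, IsClosed (C n : Set G)) → ∃ N, ∀ n, N ≤ n → C n = C N)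
    (H : ℕ → Subgroup G) (hmono : Monotone H) (hclosed : ∀ n, IsClosed (H n : Set G)) :
    IsClosed (⋃ n, (H n : Set G)) ∧ ∃ S : Subgroup G, (S : Set G) = ⋃ n, (H n : Set G) := by
  have hCmono : Monotone fun n => H n ⊓ V := fun _ _ h => inf_le_inf_right V (hmono h)
  obtain ⟨N, hN⟩ := hacc _ hCmono (fun _ => inf_le_right)
    (fun n => (hclosed n).inter (V.isClosed_of_isOpen hVopen))
  have hS : ((⨆ n, H n : Subgroup G) : Set G) = ⋃ n, (H n : Set G) :=
    Subgroup.coe_iSup_of_directed hmono.directed_le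
  have hSV : (((⨆ n, H n) ⊓ V : Subgroup G) : Set G) = (H N : Set G) ∩ V := by
    rw [Subgroup.coe_inf, hS, Set.iUnion_inter]
    exact Monotone.iSup_eq_of_stabilizes (fun _ _ h => Set.inter_subset_inter_left _ (hmono h))
      fun n hn => by simpa only [Subgroup.coe_inf] using congrArg SetLike.coe (hN n hn)
  have hSclosed := Subgroup.isClosed_of_isClosed_inf_of_isOpen _ V hVopen
    (hSV ▸ (hclosed N).inter (V.isClosed_of_isOpen hVopen))
  exact ⟨hS ▸ hSclosed, _, hS⟩
end

section
/- Let G be a metrizable topological group, H a topological group, φ : G → H an injective continuous homomorphism, and α, β automorphisms of G and H respectively with β ∘ φ = φ ∘ α. If U_β ∩ M_β = {1} in H, then U_α ∩ M_α = {1} in G. -/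
/-!
Since `φ` intertwines all integer powers of `α` and `β`, continuity sends `U_α` into `U_β`, and
sends `M_α` into `M_β` because the closure of the image orbit lies in the compact image of the
closed orbit (closures of compact sets are compact in topological groups). So `φ` maps
`U_α ∩ M_α` into `U_β ∩ M_β = {1}`, and injectivity finishes.
-/

open Filter Topology

namespace MulAut

variable {G H : Type*} [Group G] [Group H]

def contractionGroup [TopologicalSpace G] (α : MulAut G) : Set G :=
  {x | Tendsto (fun k : ℕ => (α ^ k) x) atTop (𝓝 1)}

def leviFactor [TopologicalSpace G] (α : MulAut G) : Set G :=
  {x | IsCompact (closure (Set.range fun n : ℤ => (α ^ n) x))}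

section Intertwining

variable {α : MulAut G} {β : MulAut H} {f : G → H}

theorem inv_apply_of_apply_comm (h : ∀ g, β (f g) = f (α g)) (g : G) :
    β⁻¹ (f g) = f (α⁻¹ g) := by
  conv_lhs => rw [← apply_inv_self G α g, ← h, inv_apply_self]

theorem pow_apply_of_apply_comm (h : ∀ g, β (f g) = f (α g)) :
    ∀ (k : ℕ) (g : G), (β ^ k) (f g) = f ((α ^ k) g)
  | 0, _ => rfl
  | k + 1, g => by
    rw [pow_succ, pow_succ, mul_apply, mul_apply, h, pow_apply_of_apply_comm h k]

theorem zpow_apply_of_apply_comm (h : ∀ g, β (f g) = f (α g)) (n : ℤ) (g : G) :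
    (β ^ n) (f g) = f ((α ^ n) g) := by
  cases n with
  | ofNat k => exact pow_apply_of_apply_comm h k g
  | negSucc k =>
    rw [zpow_negSucc, zpow_negSucc, ← inv_pow, ← inv_pow]
    exact pow_apply_of_apply_comm (inv_apply_of_apply_comm h) (k + 1) g

end Intertwining

variable [TopologicalSpace G] [TopologicalSpace H]

theorem one_mem_contractionGroup (α : MulAut G) : (1 : G) ∈ α.contractionGroup := by
  simp only [contractionGroup, Set.mem_ofPred_eq, map_one, tendsto_const_nhds]

theorem one_mem_leviFactor [R1Space G] (α : MulAut G) : (1 : G) ∈ α.leviFactor := by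
  simp only [leviFactor, Set.mem_ofPred_eq, map_one, Set.range_const]
  exact isCompact_singleton.closure

variable {α : MulAut G} {β : MulAut H} {φ : G →* H}

theorem map_mem_contractionGroup (hφ : Continuous φ) (h : ∀ g, β (φ g) = φ (α g)) {x : G}
    (hx : x ∈ α.contractionGroup) : φ x ∈ β.contractionGroup := by
  simp only [contractionGroup, Set.mem_ofPred_eq, pow_apply_of_apply_comm h]
  exact (hφ.tendsto' 1 1 (map_one φ)).comp hx

theorem map_mem_leviFactor [R1Space H] (hφ : Continuous φ) (h : ∀ g, β (φ g) = φ (α g))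
    {x : G} (hx : x ∈ α.leviFactor) : φ x ∈ β.leviFactor := by
  refine (hx.image hφ).closure_of_subset ?_
  rintro _ ⟨n, rfl⟩
  exact ⟨(α ^ n) x, subset_closure ⟨n, rfl⟩, (zpow_apply_of_apply_comm h n x).symm⟩

end MulAut

open MulAut in
theorem contraction_levi_trivial_of_embedding_general {G H : Type*}
    [Group G] [TopologicalSpace G] [IsTopologicalGroup G]
    [Group H] [TopologicalSpace H] [IsTopologicalGroup H]
    (φ : G →* H) (hφcont : Continuous φ) (hφinj : Function.Injective φ)
    (α : MulAut G) (β : MulAut H) (hcomm : ∀ g : G, β (φ g) = φ (α g))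
    (hH : {y : H | Tendsto (fun k : ℕ => (β ^ k) y) atTop (𝓝 1)} ∩
        {y : H | IsCompact (closure (Set.range fun n : ℤ => (β ^ n) y))} = {1}) :
    {x : G | Tendsto (fun k : ℕ => (α ^ k) x) atTop (𝓝 1)} ∩
      {x : G | IsCompact (closure (Set.range fun n : ℤ => (α ^ n) x))} = {1} := by
  change α.contractionGroup ∩ α.leviFactor = {1}
  change β.contractionGroup ∩ β.leviFactor = {1} at hH
  refine Set.Subset.antisymm ?_ (Set.singleton_subset_iff.2
    ⟨one_mem_contractionGroup α, one_mem_leviFactor α⟩)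
  rintro x ⟨hU, hM⟩
  have hφx : φ x ∈ β.contractionGroup ∩ β.leviFactor :=
    ⟨map_mem_contractionGroup hφcont hcomm hU, map_mem_leviFactor hφcont hcomm hM⟩
  rw [hH] at hφx
  exact (map_eq_one_iff φ hφinj).1 hφx

/-- If `φ : G → H` is an injective continuous homomorphism intertwining automorphisms
`α` of `G` and `β` of `H` (with `G` metrizable), and `U_β ∩ M_β = {1}` in `H`, then
`U_α ∩ M_α = {1}` in `G`. -/
theorem contraction_levi_trivial_of_embedding {G H : Type*}
    [Group G] [TopologicalSpace G] [IsTopologicalGroup G] [TopologicalSpace.MetrizableSpace G]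
    [Group H] [TopologicalSpace H] [IsTopologicalGroup H]
    (φ : G →* H) (hφcont : Continuous φ) (hφinj : Function.Injective φ)
    (α : MulAut G) (β : MulAut H) (hcomm : ∀ g : G, β (φ g) = φ (α g))
    (hH : {y : H | Tendsto (fun k : ℕ => (β ^ k) y) atTop (𝓝 1)} ∩
        {y : H | IsCompact (closure (Set.range fun n : ℤ => (β ^ n) y))} = {1}) :
    {x : G | Tendsto (fun k : ℕ => (α ^ k) x) atTop (𝓝 1)} ∩
      {x : G | IsCompact (closure (Set.range fun n : ℤ => (α ^ n) x))} = {1} :=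
  contraction_levi_trivial_of_embedding_general φ hφcont hφinj α β hcomm hH
end
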